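/- There exists a family of effective RCMs R(ε), 0 ≤ ε ≤ 1/4, over four units with probabilities 3/4−ε, 1/4−ε, ε, ε and binary variables Z, X, Y, each satisfying monotonicity and exclusion restriction, such that ITT₁/ITT₂ = 1/2 for all ε while LATE = 1/2 + ε; hence LATE is not identified by monotonicity and exclusion restriction alone. -/
import Mathlib


open scoped Classical

/-- An intervention: a partial assignment of values to variables. -/
def Itv (V : Type*) (Val : V → Type*) := ∀ v, Option (Val v)

/-- A potential outcome `Y_x`: an outcome variable together with an intervention. -/
structure PO (V : Type*) (Val : V → Type*) where
  Y : V
  x : Itv V Val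

/-- A Rubin causal model (with a probability distribution on its units). -/
structure RCM (U : Type*) (V : Type*) (Val : V → Type*) where
  O : Set (PO V Val)
  F : (o : PO V Val) → U → Val o.Y
  P : U → ℝ
  P_nonneg : ∀ u, 0 ≤ P u
  P_sum : ∑ᶠ u, P u = 1

/-- Joint valuations ("counterfactuals") of a set of potential outcomes. -/
def CFVal {V : Type*} {Val : V → Type*} (O : Set (PO V Val)) :=
  (o : O) → Val o.1.Y

/-- The (pushforward) counterfactual distribution of an RCM, computed on a set
of potential outcomes. -/
noncomputable def RCM.cfOn {U V : Type*} {Val : V → Type*} (R : RCM U V Val)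
    (O : Set (PO V Val)) (g : CFVal O) : ℝ :=
  ∑ᶠ u, if ∀ o : O, R.F o.1 u = g o then R.P u else 0

/-- The counterfactual distribution of an RCM on its own defined outcomes. -/
noncomputable def RCM.cf {U V : Type*} {Val : V → Type*} (R : RCM U V Val)
    (g : CFVal R.O) : ℝ := R.cfOn R.O g

/-- Effectiveness: intervened variables take their intervened values. -/
def RCM.Effective {U V : Type*} {Val : V → Type*} (R : RCM U V Val) : Prop :=
  ∀ o, o ∈ R.O → ∀ u, ∀ y : Val o.Y, o.x o.Y = some y → R.F o u = y

/-- Update an intervention at one variable. -/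
noncomputable def upd {V : Type*} {Val : V → Type*} (x : Itv V Val) (Y : V) (y : Val Y) :
    Itv V Val :=
  fun v => if h : v = Y then some (cast (congrArg Val h.symm) y) else x v

/-- Composition, at every unit, whenever the relevant outcomes are defined. -/
def RCM.Composition {U V : Type*} {Val : V → Type*} (R : RCM U V Val) : Prop :=
  ∀ (u : U) (Y Z : V) (w : Itv V Val),
    (⟨Y, w⟩ : PO V Val) ∈ R.O → (⟨Z, w⟩ : PO V Val) ∈ R.O →
    (⟨Z, upd w Y (R.F ⟨Y, w⟩ u)⟩ : PO V Val) ∈ R.O →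
    R.F ⟨Z, upd w Y (R.F ⟨Y, w⟩ u)⟩ u = R.F ⟨Z, w⟩ u

/-- Reversibility, at every unit, whenever the relevant outcomes are defined. -/
def RCM.Reversibility {U V : Type*} {Val : V → Type*} (R : RCM U V Val) : Prop :=
  ∀ (u : U) (Y Z : V) (w : Itv V Val) (y : Val Y) (z : Val Z), Y ≠ Z →
    (⟨Y, upd w Z z⟩ : PO V Val) ∈ R.O → (⟨Z, upd w Y y⟩ : PO V Val) ∈ R.O →
    (⟨Y, w⟩ : PO V Val) ∈ R.O →
    R.F ⟨Y, upd w Z z⟩ u = y → R.F ⟨Z, upd w Y y⟩ u = z →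
    R.F ⟨Y, w⟩ u = y

/-- A structural causal model. -/
structure SCM (Uex : Type*) (V : Type*) (Val : V → Type*) where
  Pa : V → Set V
  Pa_irr : ∀ v, v ∉ Pa v
  f : (v : V) → ((w : V) → Val w) → Uex → Val v
  f_dep : ∀ v a b u, (∀ w ∈ Pa v, a w = b w) → f v a u = f v b u
  P : Uex → ℝ
  P_nonneg : ∀ u, 0 ≤ P u
  P_sum : ∑ᶠ u, P u = 1

/-- `s` solves the manipulated model `M_x` under exogenous setting `u`. -/
def SCM.IsSol {Uex V : Type*} {Val : V → Type*} (M : SCM Uex V Val)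
    (x : Itv V Val) (u : Uex) (s : ∀ w, Val w) : Prop :=
  ∀ w, s w = (x w).getD (M.f w s u)

/-- `M` has a unique solution under every intervention and exogenous setting. -/
def SCM.Uniq {Uex V : Type*} {Val : V → Type*} (M : SCM Uex V Val) : Prop :=
  ∀ (x : Itv V Val) (u : Uex), ∃! s, M.IsSol x u s

/-- The potential outcome `Y_x(u)` of an SCM with unique solutions. -/
noncomputable def SCM.po {Uex V : Type*} {Val : V → Type*} (M : SCM Uex V Val)
    (h : M.Uniq) (o : PO V Val) (u : Uex) : Val o.Y :=
  (h o.x u).exists.choose o.Y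

/-- The counterfactual distribution of an SCM on a set of potential outcomes. -/
noncomputable def SCM.cf {Uex V : Type*} {Val : V → Type*} (M : SCM Uex V Val)
    (h : M.Uniq) (O : Set (PO V Val)) (g : CFVal O) : ℝ :=
  ∑ᶠ u, if ∀ o : O, M.po h o.1 u = g o then M.P u else 0

/-- `M` represents `R`: the counterfactual distribution of `M` marginalizes to
that of `R` on the outcomes defined by `R`. -/
def Represents {Uex U V : Type*} {Val : V → Type*} (M : SCM Uex V Val) (h : M.Uniq)
    (R : RCM U V Val) : Prop :=
  ∀ g : CFVal R.O, M.cf h R.O g = R.cf g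

/-- `R` is representable by some SCM with unique solutions. -/
def RCM.Representable {U V : Type*} {Val : V → Type*} (R : RCM U V Val) : Prop :=
  ∃ (Uex : Type) (M : SCM Uex V Val) (h : M.Uniq), Finite Uex ∧ Represents M h R

/-- `R'` extends `R`. -/
def RCM.Extends {U V : Type*} {Val : V → Type*} (R' R : RCM U V Val) : Prop :=
  R.O ⊆ R'.O ∧ (∀ o ∈ R.O, R'.F o = R.F o) ∧ R'.P = R.P

/-- A full RCM defines every potential outcome. -/
def RCM.Full {U V : Type*} {Val : V → Type*} (R : RCM U V Val) : Prop :=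
  R.O = Set.univ

/-- `R'` is a submodel of `R`. -/
def Submodel {U V : Type*} {Val : V → Type*} (R' R : RCM U V Val) : Prop :=
  R'.O ⊆ R.O ∧ (∀ o ∈ R'.O, R'.F o = R.F o) ∧ R'.P = R.P

/- LATE setting: variables `Fin 3` (`0 = Z` the assignment, `1 = X` the
treatment, `2 = Y` the outcome), all binary. -/

/-- The empty intervention. -/
def e3 : Itv (Fin 3) (fun _ => Fin 2) := fun _ => none

/-- Intervention `Z = z`. -/
noncomputable def iZ (z : Fin 2) : Itv (Fin 3) (fun _ => Fin 2) := upd e3 0 z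

/-- Intervention `X = x`. -/
noncomputable def iX (x : Fin 2) : Itv (Fin 3) (fun _ => Fin 2) := upd e3 1 x

/-- Intervention `Z = z, X = x`. -/
noncomputable def iZX (z x : Fin 2) : Itv (Fin 3) (fun _ => Fin 2) := upd (iZ z) 1 x

/-- The potential outcome `X_z(u)`. -/
noncomputable def XF {U : Type*} (R : RCM U (Fin 3) (fun _ => Fin 2)) (z : Fin 2)
    (u : U) : Fin 2 := R.F ⟨1, iZ z⟩ u

/-- The potential outcome `Y_x(u)`. -/
noncomputable def YX {U : Type*} (R : RCM U (Fin 3) (fun _ => Fin 2)) (x : Fin 2)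
    (u : U) : Fin 2 := R.F ⟨2, iX x⟩ u

/-- The potential outcome `Y_{z,x}(u)`. -/
noncomputable def YZX {U : Type*} (R : RCM U (Fin 3) (fun _ => Fin 2)) (z x : Fin 2)
    (u : U) : Fin 2 := R.F ⟨2, iZX z x⟩ u

/-- The potential outcome `Y_z(u)`. -/
noncomputable def YZ {U : Type*} (R : RCM U (Fin 3) (fun _ => Fin 2)) (z : Fin 2)
    (u : U) : Fin 2 := R.F ⟨2, iZ z⟩ u

/-- The local average treatment effect
`E(Y_{X=1} − Y_{X=0} | X_{Z=1} = 1 ∧ X_{Z=0} = 0)`. -/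
noncomputable def LATE {U : Type*} (R : RCM U (Fin 3) (fun _ => Fin 2)) : ℝ :=
  (∑ᶠ u, if XF R 1 u = 1 ∧ XF R 0 u = 0 then
      R.P u * (((YX R 1 u).val : ℝ) - ((YX R 0 u).val : ℝ)) else 0) /
  (∑ᶠ u, if XF R 1 u = 1 ∧ XF R 0 u = 0 then R.P u else 0)

/-- `ITT₂ = E(X_{Z=1} − X_{Z=0})`. -/
noncomputable def ITT2 {U : Type*} (R : RCM U (Fin 3) (fun _ => Fin 2)) : ℝ :=
  ∑ᶠ u, R.P u * (((XF R 1 u).val : ℝ) - ((XF R 0 u).val : ℝ))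

/-- `ITT₁ = E(Y_{Z=1, X_{Z=1}} − Y_{Z=0, X_{Z=0}})`. -/
noncomputable def ITT1 {U : Type*} (R : RCM U (Fin 3) (fun _ => Fin 2)) : ℝ :=
  ∑ᶠ u, R.P u *
    (((YZX R 1 (XF R 1 u) u).val : ℝ) - ((YZX R 0 (XF R 0 u) u).val : ℝ))

lemma upd_self {V : Type*} {Val : V → Type*} (x : Itv V Val) (Y : V) (y : Val Y) :
    upd x Y y Y = some y := by simp [upd]

lemma upd_ne {V : Type*} {Val : V → Type*} (x : Itv V Val) (Y : V) (y : Val Y)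
    (v : V) (h : v ≠ Y) : upd x Y y v = x v := by simp [upd, h]

lemma iZ_apply0 (z : Fin 2) : iZ z 0 = some z := upd_self _ _ _
lemma iZ_apply1 (z : Fin 2) : iZ z 1 = none := upd_ne _ _ _ _ (by decide)
lemma iZ_apply2 (z : Fin 2) : iZ z 2 = none := upd_ne _ _ _ _ (by decide)
lemma iZX_apply0 (z x : Fin 2) : iZX z x 0 = some z := by
  rw [iZX, upd_ne _ _ _ _ (by decide)]; exact iZ_apply0 z
lemma iZX_apply1 (z x : Fin 2) : iZX z x 1 = some x := upd_self _ _ _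
lemma iZX_apply2 (z x : Fin 2) : iZX z x 2 = none := by
  rw [iZX, upd_ne _ _ _ _ (by decide)]; exact iZ_apply2 z
lemma iX_apply0 (x : Fin 2) : iX x 0 = none := upd_ne _ _ _ _ (by decide)
lemma iX_apply1 (x : Fin 2) : iX x 1 = some x := upd_self _ _ _
lemma iX_apply2 (x : Fin 2) : iX x 2 = none := upd_ne _ _ _ _ (by decide)

/-- Auxiliary: the outcome function of the LATE example. -/
noncomputable def Ffun15 (o : PO (Fin 3) (fun _ => Fin 2)) (u : Fin 4) : Fin 2 :=
  if o.Y = 1 then (o.x 0).getD 0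
  else if (o.x 0).isSome then (if o.x 1 = some 1 then ![1,0,0,1] u else ![0,1,0,1] u)
  else (if o.x 1 = some 1 then ![1,0,1,1] u else ![0,1,0,1] u)

lemma Ffun15_X (z : Fin 2) (u : Fin 4) : Ffun15 ⟨1, iZ z⟩ u = z := by
  simp [Ffun15, iZ_apply0]

lemma Ffun15_YZX (z x : Fin 2) (u : Fin 4) :
    Ffun15 ⟨2, iZX z x⟩ u = if x = 1 then ![1,0,0,1] u else ![0,1,0,1] u := by
  simp only [Ffun15, iZX_apply0, iZX_apply1]
  norm_num
  fin_cases x <;> simp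

lemma Ffun15_YX (x : Fin 2) (u : Fin 4) :
    Ffun15 ⟨2, iX x⟩ u = if x = 1 then ![1,0,1,1] u else ![0,1,0,1] u := by
  simp only [Ffun15, iX_apply0, iX_apply1]
  norm_num
  fin_cases x <;> simp
/-- The LATE example: a family of effective RCMs `R(ε)` satisfying
monotonicity and exclusion restriction, with `ITT₁/ITT₂ = 1/2` throughout but
`LATE = 1/2 + ε`; hence LATE is not identified by monotonicity and the
exclusion restriction alone. -/
theorem stmt15 (ε : ℝ) (h0 : 0 ≤ ε) (h4 : ε ≤ 1 / 4) :
    ∃ R : RCM (Fin 4) (Fin 3) (fun _ => Fin 2),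
      R.Effective ∧
      R.P = ![3 / 4 - ε, 1 / 4 - ε, ε, ε] ∧
      (∀ z x : Fin 2,
        (⟨1, iZ z⟩ : PO (Fin 3) (fun _ => Fin 2)) ∈ R.O ∧
        (⟨2, iZX z x⟩ : PO (Fin 3) (fun _ => Fin 2)) ∈ R.O ∧
        (⟨2, iX x⟩ : PO (Fin 3) (fun _ => Fin 2)) ∈ R.O) ∧
      (∀ u, XF R 1 u = 1 ∧ XF R 0 u = 0) ∧
      (∀ (u : Fin 4) (z : Fin 2), YZX R z 1 u = ![1, 0, 0, 1] u ∧
        YZX R z 0 u = ![0, 1, 0, 1] u) ∧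
      (∀ u : Fin 4, YX R 1 u = ![1, 0, 1, 1] u ∧ YX R 0 u = ![0, 1, 0, 1] u) ∧
      (∀ u, XF R 0 u = 1 → XF R 1 u = 1) ∧
      (∀ u x, YZX R 0 x u = YZX R 1 x u) ∧
      ITT1 R / ITT2 R = 1 / 2 ∧
      LATE R = 1 / 2 + ε := by
  classical
  refine ⟨⟨{o | (∃ z, o = ⟨1, iZ z⟩) ∨ (∃ z x, o = ⟨2, iZX z x⟩) ∨ (∃ x, o = ⟨2, iX x⟩)},
      Ffun15, ![3 / 4 - ε, 1 / 4 - ε, ε, ε], ?_, ?_⟩, ?_, rfl, ?_, ?_, ?_, ?_, ?_, ?_, ?_, ?_⟩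
  · intro u
    fin_cases u <;> simp <;> linarith
  · rw [finsum_eq_sum_of_fintype, Fin.sum_univ_four]
    simp; ring
  · rintro o (⟨z, rfl⟩ | ⟨z, x, rfl⟩ | ⟨x, rfl⟩) u y hy <;>
      simp [iZ_apply1, iZX_apply2, iX_apply2] at hy
  · intro z x
    exact ⟨Or.inl ⟨z, rfl⟩, Or.inr (Or.inl ⟨z, x, rfl⟩), Or.inr (Or.inr ⟨x, rfl⟩)⟩
  · intro u; exact ⟨Ffun15_X 1 u, Ffun15_X 0 u⟩
  · intro u z
    refine ⟨?_, ?_⟩ <;> simp [YZX, Ffun15_YZX]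
  · intro u
    refine ⟨?_, ?_⟩ <;> simp [YX, Ffun15_YX]
  · intro u h; exact Ffun15_X 1 u
  · intro u x
    simp only [YZX]
    exact (Ffun15_YZX 0 x u).trans (Ffun15_YZX 1 x u).symm
  · simp only [ITT1, ITT2, XF, YZX, finsum_eq_sum_of_fintype]
    simp only [Ffun15_X, Ffun15_YZX]
    simp [Fin.sum_univ_four]
    rw [show (3/4-ε+(4⁻¹-ε)+ε+ε : ℝ) = 1 by ring]
    norm_num
  · simp only [LATE, XF, YX, finsum_eq_sum_of_fintype]
    simp only [Ffun15_X, Ffun15_YX]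
    simp [Fin.sum_univ_four]
    norm_num
    ring
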